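/- Let D be an H-colored digraph without isolated vertices, 𝔉 a walk-preservative H-class partition of A(D), and 𝒮⊆𝔉 an independent and l-absorbent set in C_𝔉(D) for some l≥1 such that N^+(𝒮)=∅. Then for every k≥2, every kernel by paths in D⟨∪_{F∈𝒮}F⟩ is a (k,l+1,H)-kernel by walks in D. -/
import Mathlib


universe u v

/-- A walk of length `n` in the digraph with arc relation `R`;
its vertices are `x 0, x 1, …, x n`. -/
def IsWalk {α : Type u} (R : α → α → Prop) (x : ℕ → α) (n : ℕ) : Prop :=
  ∀ i < n, R (x i) (x (i + 1))

/-- A (directed) path: a walk whose vertices `x 0, …, x n` are pairwise distinct. -/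
def IsPath {α : Type u} (R : α → α → Prop) (x : ℕ → α) (n : ℕ) : Prop :=
  IsWalk R x n ∧ ∀ i ≤ n, ∀ j ≤ n, x i = x j → i = j

/-- There is a directed path from `u` to `v` in the digraph with arc relation `R`. -/
def ExistsPath {α : Type u} (R : α → α → Prop) (u v : α) : Prop :=
  ∃ x n, IsPath R x n ∧ x 0 = u ∧ x n = v

/-- A cycle of length `n` in the digraph with arc relation `R`. -/
def IsCycle {α : Type u} (R : α → α → Prop) (x : ℕ → α) (n : ℕ) : Prop :=
  1 ≤ n ∧ IsWalk R x n ∧ x n = x 0 ∧ ∀ i < n, ∀ j < n, x i = x j → i = j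

/-- The digraph with vertex set `Vs` and arc relation `R` is strongly connected:
any two vertices are joined by directed paths in both directions. -/
def StronglyConnectedOn {α : Type u} (R : α → α → Prop) (Vs : Set α) : Prop :=
  ∀ u ∈ Vs, ∀ v ∈ Vs, ExistsPath R u v

/-- The digraph with vertex set `Vs` and arc relation `R` is unilateral:
any two vertices are joined by a directed path in at least one direction. -/
def UnilateralOn {α : Type u} (R : α → α → Prop) (Vs : Set α) : Prop :=
  ∀ u ∈ Vs, ∀ v ∈ Vs, ExistsPath R u v ∨ ExistsPath R v u

/-- A kernel by paths of the digraph with vertex set `Vs` and arc relation `R`: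
no directed path joins two distinct vertices of `K`, and every vertex of `Vs`
not in `K` has a directed path to a vertex of `K`. -/
def KernelByPaths {α : Type u} (R : α → α → Prop) (Vs : Set α) (K : Set α) : Prop :=
  K ⊆ Vs ∧
  (∀ u ∈ K, ∀ v ∈ K, u ≠ v → ¬ ExistsPath R u v) ∧
  (∀ u ∈ Vs, u ∉ K → ∃ v ∈ K, ExistsPath R u v)

/-- A `(k,l)`-kernel of the digraph with vertex set `Vs` and arc relation `R`:
every walk between two distinct vertices of `S` has length at least `k`, and
every vertex not in `S` has a walk of length at most `l` to a vertex of `S`. -/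
def klKernel {α : Type u} (R : α → α → Prop) (Vs : Set α) (k l : ℕ) (S : Set α) : Prop :=
  S ⊆ Vs ∧
  (∀ u ∈ S, ∀ v ∈ S, u ≠ v → ∀ x n, IsWalk R x n → x 0 = u → x n = v → k ≤ n) ∧
  (∀ u ∈ Vs, u ∉ S → ∃ v ∈ S, ∃ x n, IsWalk R x n ∧ x 0 = u ∧ x n = v ∧ n ≤ l)

/-- An independent set of the digraph with vertex set `Vs` and arc relation `R`:
there is no arc between two distinct vertices of `S`. -/
def IndependentOn {α : Type u} (R : α → α → Prop) (Vs : Set α) (S : Set α) : Prop :=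
  S ⊆ Vs ∧ ∀ u ∈ S, ∀ v ∈ S, u ≠ v → ¬ R u v

/-- An `l`-absorbent set of the digraph with vertex set `Vs` and arc relation `R`. -/
def lAbsorbentOn {α : Type u} (R : α → α → Prop) (Vs : Set α) (l : ℕ) (S : Set α) : Prop :=
  ∀ u ∈ Vs, u ∉ S → ∃ v ∈ S, ∃ x n, IsWalk R x n ∧ x 0 = u ∧ x n = v ∧ n ≤ l

section HColored

variable {V : Type u} {C : Type v}

/-- The arc relation of the subdigraph arc-induced by a set `F` of arcs. -/
def memRel (F : Set (V × V)) : V → V → Prop := fun a b => (a, b) ∈ F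

/-- The vertex set of the subdigraph `D⟨F⟩` arc-induced by a set `F` of arcs. -/
def classVerts (F : Set (V × V)) : Set V := {a | ∃ b, (a, b) ∈ F ∨ (b, a) ∈ F}

/-- The set of obstruction indices of the open walk `x 0, …, x n` in the
`H`-colored digraph with coloring `ρ`, where `HA` is the arc relation of `H`. -/
def obstructions (HA : C → C → Prop) (ρ : V → V → C) (x : ℕ → V) (n : ℕ) : Set ℕ :=
  {i | 1 ≤ i ∧ i < n ∧ ¬ HA (ρ (x (i - 1)) (x i)) (ρ (x i) (x (i + 1)))}

/-- The `H`-length of the open walk `x 0, …, x n`: the number of obstructions plus one. -/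
noncomputable def hLength (HA : C → C → Prop) (ρ : V → V → C) (x : ℕ → V) (n : ℕ) : ℕ :=
  (obstructions HA ρ x n).ncard + 1

/-- `S` is `(k,H)`-independent by walks: every walk between two distinct
vertices of `S` has `H`-length at least `k`. -/
def kHIndependentByWalks (DA : V → V → Prop) (HA : C → C → Prop) (ρ : V → V → C)
    (k : ℕ) (S : Set V) : Prop :=
  ∀ u ∈ S, ∀ v ∈ S, u ≠ v →
    ∀ x n, IsWalk DA x n → x 0 = u → x n = v → k ≤ hLength HA ρ x n

/-- `S` is `(l,H)`-absorbent by walks: every vertex not in `S` has a walk to a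
vertex of `S` of `H`-length at most `l`. -/
def lHAbsorbentByWalks (DA : V → V → Prop) (HA : C → C → Prop) (ρ : V → V → C)
    (l : ℕ) (S : Set V) : Prop :=
  ∀ u, u ∉ S → ∃ v ∈ S, ∃ x n, IsWalk DA x n ∧ x 0 = u ∧ x n = v ∧ hLength HA ρ x n ≤ l

/-- A `(k,l,H)`-kernel by walks. -/
def klHKernelByWalks (DA : V → V → Prop) (HA : C → C → Prop) (ρ : V → V → C)
    (k l : ℕ) (S : Set V) : Prop :=
  kHIndependentByWalks DA HA ρ k S ∧ lHAbsorbentByWalks DA HA ρ l S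

/-- `𝔉` is an `H`-class partition of the arc set of `D`: it is a partition of the
arc set, and two consecutive arcs form an `H`-arc of colors iff they lie in a
common class. -/
def IsHClassPartition (DA : V → V → Prop) (HA : C → C → Prop) (ρ : V → V → C)
    (𝔉 : Set (Set (V × V))) : Prop :=
  (∀ F ∈ 𝔉, F.Nonempty ∧ ∀ p ∈ F, DA p.1 p.2) ∧
  (∀ u v : V, DA u v → ∃! F, F ∈ 𝔉 ∧ (u, v) ∈ F) ∧
  (∀ u v w : V, DA u v → DA v w →
    (HA (ρ u v) (ρ v w) ↔ ∃ F ∈ 𝔉, (u, v) ∈ F ∧ (v, w) ∈ F))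

/-- There exist arcs `(u,v) ∈ F` and `(v,w) ∈ G`. -/
def classArc (F G : Set (V × V)) : Prop := ∃ u v w : V, (u, v) ∈ F ∧ (v, w) ∈ G

/-- The arc relation of the `H`-class digraph `C_𝔉(D)` (whose vertex set is `𝔉`). -/
def CRel (𝔉 : Set (Set (V × V))) : Set (V × V) → Set (V × V) → Prop :=
  fun F G => F ∈ 𝔉 ∧ G ∈ 𝔉 ∧ classArc F G

/-- `𝔉` is walk-preservative: for every arc `(F,G)` of `C_𝔉(D)` and every vertex
`z` of `D⟨F⟩` there is a directed path in `D⟨F⟩` from `z` to some vertex of `D⟨G⟩`. -/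
def WalkPreservative (𝔉 : Set (Set (V × V))) : Prop :=
  ∀ F ∈ 𝔉, ∀ G ∈ 𝔉, classArc F G → ∀ z ∈ classVerts F,
    ∃ w ∈ classVerts G, ExistsPath (memRel F) z w

/-- `N⁺(𝒮)`: the classes outside `𝒮` receiving an arc of `C_𝔉(D)` from `𝒮`. -/
def outNbhd (𝔉 𝒮 : Set (Set (V × V))) : Set (Set (V × V)) :=
  {G | G ∈ 𝔉 ∧ G ∉ 𝒮 ∧ ∃ F ∈ 𝒮, classArc F G}

/-- `N⁻_𝔉(x)`: the classes containing an arc entering `x`. -/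
def inClasses (𝔉 : Set (Set (V × V))) (x : V) : Set (Set (V × V)) :=
  {F | F ∈ 𝔉 ∧ ∃ u, (u, x) ∈ F}

/-- `N⁺_𝔉(x)`: the classes containing an arc leaving `x`. -/
def outClasses (𝔉 : Set (Set (V × V))) (x : V) : Set (Set (V × V)) :=
  {F | F ∈ 𝔉 ∧ ∃ v, (x, v) ∈ F}

/-- `N_𝔉(x) = N⁻_𝔉(x) ∪ N⁺_𝔉(x)`. -/
def nbhdClasses (𝔉 : Set (Set (V × V))) (x : V) : Set (Set (V × V)) :=
  inClasses 𝔉 x ∪ outClasses 𝔉 x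

/-- `x` is obstruction-free in `D`: every arc entering `x` followed by every arc
leaving `x` is an `H`-arc of colors. -/
def ObstructionFree (DA : V → V → Prop) (HA : C → C → Prop) (ρ : V → V → C) (x : V) : Prop :=
  ∀ u w, DA u x → DA x w → HA (ρ u x) (ρ x w)

/-- `C_𝔉(D)` has no sinks: every class has an out-arc to a different class. -/
def CNoSinks (𝔉 : Set (Set (V × V))) : Prop :=
  ∀ F ∈ 𝔉, ∃ G ∈ 𝔉, G ≠ F ∧ classArc F G

/-- The (loopless) subdigraph `D⟨F⟩` has no sinks. -/
def NoSinksIn (F : Set (V × V)) : Prop :=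
  ∀ x ∈ classVerts F, ∃ y, (x, y) ∈ F

end HColored

section AuxLemmas

lemma isWalk_mono {α : Type u} {R : α → α → Prop} {x : ℕ → α} {n m : ℕ}
    (h : IsWalk R x n) (hmn : m ≤ n) : IsWalk R x m :=
  fun i hi => h i (lt_of_lt_of_le hi hmn)

lemma obstructions_finite {V : Type u} {C : Type v} (HA : C → C → Prop) (ρ : V → V → C)
    (x : ℕ → V) (n : ℕ) : (obstructions HA ρ x n).Finite :=
  (Set.finite_Iio n).subset fun _ hi => hi.2.1

lemma existsPath_single {α : Type u} {R : α → α → Prop} {a b : α}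
    (h : R a b) (hne : a ≠ b) : ExistsPath R a b := by
  refine ⟨fun i => if i = 0 then a else b, 1, ⟨?_, ?_⟩, by simp, by simp⟩
  · intro i hi
    interval_cases i
    simpa using h
  · intro i hi j hj hx
    interval_cases i <;> interval_cases j <;> simp_all

lemma walk_toPath {α : Type u} (R : α → α → Prop) :
    ∀ n, ∀ x : ℕ → α, IsWalk R x n → x 0 ≠ x n → ExistsPath R (x 0) (x n) := by
  intro n
  induction n using Nat.strong_induction_on with
  | _ n ih =>
    intro x hw hne
    by_cases hrep : ∃ i, ∃ j, i ≤ n ∧ j ≤ n ∧ i < j ∧ x i = x j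
    · obtain ⟨i, j, hi, hj, hij, hxe⟩ := hrep
      set m := n - (j - i) with hm
      set y : ℕ → α := fun t => if t ≤ i then x t else x (t + (j - i)) with hy
      have hy0 : y 0 = x 0 := by simp [hy]
      have hym : y m = x n := by
        by_cases h : m ≤ i
        · have hji : j = n := by omega
          have him : i = m := by omega
          simp only [hy, if_pos h]
          rw [← him, hxe, hji]
        · simp only [hy, if_neg h]
          congr 1
          omega
      have hwy : IsWalk R y m := by
        intro t ht
        by_cases h1 : t + 1 ≤ i
        · have h0 : t ≤ i := by omega
          simp only [hy, if_pos h1, if_pos h0]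
          exact hw t (by omega)
        · by_cases h2 : t ≤ i
          · have hti : t = i := by omega
            simp only [hy, if_pos h2, if_neg h1]
            rw [hti, hxe, (by omega : i + 1 + (j - i) = j + 1)]
            exact hw j (by omega)
          · simp only [hy, if_neg h2, if_neg (by omega : ¬ t + 1 ≤ i)]
            have he : t + 1 + (j - i) = (t + (j - i)) + 1 := by omega
            rw [he]
            exact hw (t + (j - i)) (by omega)
      have hlt : m < n := by omega
      have := ih m hlt y hwy (by rw [hy0, hym]; exact hne)
      rwa [hy0, hym] at this
    · push_neg at hrep
      refine ⟨x, n, ⟨hw, fun i hi j hj hx => ?_⟩, rfl, rfl⟩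
      rcases lt_trichotomy i j with h | h | h
      · exact absurd hx (hrep i j hi hj h)
      · exact h
      · exact absurd hx.symm (hrep j i hj hi h)

lemma walk_toPath' {α : Type u} (R : α → α → Prop) {x : ℕ → α} {n : ℕ} {u v : α}
    (hw : IsWalk R x n) (h0 : x 0 = u) (hn : x n = v) (hne : u ≠ v) : ExistsPath R u v := by
  have := walk_toPath R n x hw (by rw [h0, hn]; exact hne)
  rwa [h0, hn] at this

lemma wconcat_walk {α : Type u} {R : α → α → Prop} {x y : ℕ → α} {n p : ℕ}
    (hx : IsWalk R x n) (hy : IsWalk R y p) (hxy : x n = y 0) :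
    IsWalk R (fun i => if i ≤ n then x i else y (i - n)) (n + p) := by
  intro i hi
  show R (if i ≤ n then x i else y (i - n)) (if i + 1 ≤ n then x (i + 1) else y (i + 1 - n))
  by_cases h1 : i + 1 ≤ n
  · rw [if_pos (by omega : i ≤ n), if_pos h1]
    exact hx i (by omega)
  · by_cases h2 : i ≤ n
    · have hin : i = n := by omega
      subst hin
      rw [if_pos le_rfl, if_neg h1, hxy, (by omega : i + 1 - i = 1)]
      exact hy 0 (by omega)
    · rw [if_neg h2, if_neg h1, (by omega : i + 1 - n = (i - n) + 1)]
      exact hy (i - n) (by omega)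

lemma wconcat_zero {α : Type u} (x y : ℕ → α) (n : ℕ) :
    (fun i => if i ≤ n then x i else y (i - n)) 0 = x 0 := by
  show (if 0 ≤ n then x 0 else y (0 - n)) = x 0
  rw [if_pos (Nat.zero_le n)]

lemma wconcat_last {α : Type u} (x y : ℕ → α) (n p : ℕ) (hxy : x n = y 0) :
    (fun i => if i ≤ n then x i else y (i - n)) (n + p) = y p := by
  show (if n + p ≤ n then x (n + p) else y (n + p - n)) = y p
  by_cases h : p = 0
  · subst h
    rw [if_pos (by omega), Nat.add_zero, hxy]
  · rw [if_neg (by omega), (by omega : n + p - n = p)]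

lemma wconcat_obstructions {V : Type u} {C : Type v} (HA : C → C → Prop) (ρ : V → V → C)
    (x y : ℕ → V) (n p : ℕ) (hxy : x n = y 0) :
    obstructions HA ρ (fun i => if i ≤ n then x i else y (i - n)) (n + p) ⊆
      obstructions HA ρ x n ∪ ((· + n) '' obstructions HA ρ y p) ∪ {n} := by
  intro i hi
  simp only [obstructions, Set.mem_setOf_eq] at hi
  obtain ⟨h1, h2, h3⟩ := hi
  by_cases hc : i < n
  · left; left
    refine ⟨h1, hc, ?_⟩
    rw [if_pos (by omega : i - 1 ≤ n), if_pos (by omega : i ≤ n), if_pos (by omega : i + 1 ≤ n)] at h3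
    exact h3
  · by_cases hc2 : i = n
    · right
      exact hc2
    · left; right
      refine ⟨i - n, ⟨by omega, by omega, ?_⟩, by show i - n + n = i; omega⟩
      have e2 : (if i ≤ n then x i else y (i - n)) = y (i - n) := if_neg (by omega)
      have e3 : (if i + 1 ≤ n then x (i + 1) else y (i + 1 - n)) = y (i - n + 1) := by
        rw [if_neg (by omega), (by omega : i + 1 - n = i - n + 1)]
      have e1 : (if i - 1 ≤ n then x (i - 1) else y (i - 1 - n)) = y (i - n - 1) := by
        by_cases hb : i - 1 ≤ n
        · have : i - 1 = n := by omega
          rw [if_pos hb, this, hxy, (by omega : i - n - 1 = 0)]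
        · rw [if_neg hb, (by omega : i - 1 - n = i - n - 1)]
      rw [e1, e2, e3] at h3
      exact h3

lemma ncard_subset_insert {s t : Set ℕ} (a : ℕ) (ht : t.Finite) (h : s ⊆ t ∪ {a}) :
    s.ncard ≤ t.ncard + 1 := by
  calc s.ncard ≤ (t ∪ {a}).ncard := Set.ncard_le_ncard h (ht.union (Set.finite_singleton a))
    _ = (insert a t).ncard := by rw [Set.union_singleton]
    _ ≤ t.ncard + 1 := Set.ncard_insert_le a t

section Main

variable {V : Type u} {C : Type v} {DA : V → V → Prop} {HA : C → C → Prop} {ρ : V → V → C}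
  {𝔉 𝒮 : Set (Set (V × V))}

lemma closure_lemma (hpart : IsHClassPartition DA HA ρ 𝔉)
    (hind : IndependentOn (CRel 𝔉) 𝔉 𝒮) (hout : outNbhd 𝔉 𝒮 = ∅)
    {F : Set (V × V)} (hF : F ∈ 𝒮) {a b c : V}
    (hab : (a, b) ∈ F) (hbc : DA b c) : (b, c) ∈ F := by
  obtain ⟨G, ⟨hG𝔉, hGmem⟩, hGuniq⟩ := hpart.2.1 b c hbc
  have harcFG : classArc F G := ⟨a, b, c, hab, hGmem⟩
  by_cases hGF : G = F
  · exact hGF ▸ hGmem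
  · by_cases hG𝒮 : G ∈ 𝒮
    · exact absurd (⟨hind.1 hF, hG𝔉, harcFG⟩ : CRel 𝔉 F G)
        (hind.2 F hF G hG𝒮 (fun h => hGF h.symm))
    · have : G ∈ outNbhd 𝔉 𝒮 := ⟨hG𝔉, hG𝒮, F, hF, harcFG⟩
      rw [hout] at this
      exact this.elim

lemma obstructions_class_empty (hpart : IsHClassPartition DA HA ρ 𝔉)
    {F : Set (V × V)} (hF : F ∈ 𝔉) {x : ℕ → V} {n : ℕ}
    (harcs : ∀ i < n, (x i, x (i + 1)) ∈ F) : obstructions HA ρ x n = ∅ := by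
  ext i
  simp only [obstructions, Set.mem_setOf_eq, Set.mem_empty_iff_false, iff_false]
  rintro ⟨h1, h2, h3⟩
  have hmem1 : (x (i - 1), x i) ∈ F := by
    have := harcs (i - 1) (by omega)
    rwa [(by omega : i - 1 + 1 = i)] at this
  have hmem2 : (x i, x (i + 1)) ∈ F := harcs i h2
  have hDA1 : DA (x (i - 1)) (x i) := (hpart.1 F hF).2 _ hmem1
  have hDA2 : DA (x i) (x (i + 1)) := (hpart.1 F hF).2 _ hmem2
  exact h3 ((hpart.2.2 _ _ _ hDA1 hDA2).mpr ⟨F, hF, hmem1, hmem2⟩)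

lemma obstructions_sUnion_empty (hpart : IsHClassPartition DA HA ρ 𝔉)
    (hind : IndependentOn (CRel 𝔉) 𝔉 𝒮) (hout : outNbhd 𝔉 𝒮 = ∅)
    {x : ℕ → V} {n : ℕ}
    (harcs : ∀ i < n, (x i, x (i + 1)) ∈ ⋃₀ 𝒮) : obstructions HA ρ x n = ∅ := by
  ext i
  simp only [obstructions, Set.mem_setOf_eq, Set.mem_empty_iff_false, iff_false]
  rintro ⟨h1, h2, h3⟩
  obtain ⟨F, hF, hmem1⟩ := harcs (i - 1) (by omega)
  rw [(by omega : i - 1 + 1 = i)] at hmem1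
  obtain ⟨F', hF', hmem2'⟩ := harcs i h2
  have hDA2 : DA (x i) (x (i + 1)) := (hpart.1 F' (hind.1 hF')).2 _ hmem2'
  have hmem2 : (x i, x (i + 1)) ∈ F := closure_lemma hpart hind hout hF hmem1 hDA2
  have hDA1 : DA (x (i - 1)) (x i) := (hpart.1 F (hind.1 hF)).2 _ hmem1
  exact h3 ((hpart.2.2 _ _ _ hDA1 hDA2).mpr ⟨F, hind.1 hF, hmem1, hmem2⟩)

lemma chain_lemma (hpart : IsHClassPartition DA HA ρ 𝔉) (hwp : WalkPreservative 𝔉) :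
    ∀ m, 1 ≤ m → ∀ φ : ℕ → Set (V × V), IsWalk (CRel 𝔉) φ m →
    ∀ z ∈ classVerts (φ 0), ∃ z' ∈ classVerts (φ m), ∃ x n,
      IsWalk DA x n ∧ x 0 = z ∧ x n = z' ∧ (obstructions HA ρ x n).ncard + 1 ≤ m := by
  intro m hm
  induction m, hm using Nat.le_induction with
  | base =>
    intro φ hφ z hz
    obtain ⟨hF0, hF1, hclassarc⟩ := hφ 0 (by omega)
    obtain ⟨w, hw, xx, q, ⟨hwalk, _⟩, hx0, hxq⟩ := hwp (φ 0) hF0 (φ 1) hF1 hclassarc z hz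
    refine ⟨w, hw, xx, q, fun i hi => (hpart.1 (φ 0) hF0).2 _ (hwalk i hi), hx0, hxq, ?_⟩
    rw [obstructions_class_empty hpart hF0 (fun i hi => hwalk i hi), Set.ncard_empty]
  | succ m hm ih =>
    intro φ hφ z hz
    obtain ⟨z'', hz'', x, n, hxwalk, hx0, hxn, hcount⟩ := ih φ (isWalk_mono hφ (by omega)) z hz
    obtain ⟨hFm, hFm1, hclassarc⟩ := hφ m (by omega)
    obtain ⟨z', hz', y, q, ⟨hywalk, _⟩, hy0, hyq⟩ := hwp (φ m) hFm (φ (m + 1)) hFm1 hclassarc z'' hz''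
    have hyDA : IsWalk DA y q := fun i hi => (hpart.1 (φ m) hFm).2 _ (hywalk i hi)
    have hjoin : x n = y 0 := by rw [hxn, hy0]
    refine ⟨z', hz', fun i => if i ≤ n then x i else y (i - n), n + q,
      wconcat_walk hxwalk hyDA hjoin, (wconcat_zero x y n).trans hx0,
      (wconcat_last x y n q hjoin).trans hyq, ?_⟩
    have hyempty : obstructions HA ρ y q = ∅ :=
      obstructions_class_empty hpart hFm (fun i hi => hywalk i hi)
    have hsubs := wconcat_obstructions HA ρ x y n q hjoin
    rw [hyempty, Set.image_empty, Set.union_empty] at hsubs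
    have hle := ncard_subset_insert n (obstructions_finite HA ρ x n) hsubs
    omega

end Main

end AuxLemmas

/-- Proposition `emptyoutneighborhood`. Let `D` be an `H`-colored
digraph without isolated vertices, `𝔉` a walk-preservative `H`-class partition of
`A(D)`, and `𝒮 ⊆ 𝔉` an independent and `l`-absorbent set in `C_𝔉(D)` for some `l ≥ 1`
such that `N⁺(𝒮) = ∅`. Then for every `k ≥ 2`, every kernel by paths in
`D⟨⋃_{F ∈ 𝒮} F⟩` is a `(k,l+1,H)`-kernel by walks in `D`. -/
theorem stmt6 {V : Type u} {C : Type v}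
    (DA : V → V → Prop) (hloopless : ∀ a : V, ¬ DA a a)
    (HA : C → C → Prop) (ρ : V → V → C)
    (hiso : ∀ x : V, ∃ y : V, DA x y ∨ DA y x)
    (𝔉 : Set (Set (V × V)))
    (hpart : IsHClassPartition DA HA ρ 𝔉)
    (hwp : WalkPreservative 𝔉)
    (l : ℕ) (hl : 1 ≤ l)
    (𝒮 : Set (Set (V × V)))
    (hind : IndependentOn (CRel 𝔉) 𝔉 𝒮)
    (habs : lAbsorbentOn (CRel 𝔉) 𝔉 l 𝒮)
    (hout : outNbhd 𝔉 𝒮 = ∅) :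
    ∀ k : ℕ, 2 ≤ k → ∀ K : Set V,
      KernelByPaths (memRel (⋃₀ 𝒮)) (classVerts (⋃₀ 𝒮)) K →
      klHKernelByWalks DA HA ρ k (l + 1) K := by
  intro k hk K hK
  obtain ⟨hK1, hK2, hK3⟩ := hK
  have hsub : ∀ {a b : V}, (a, b) ∈ ⋃₀ 𝒮 → DA a b := by
    rintro a b ⟨F, hF, h⟩
    exact (hpart.1 F (hind.1 hF)).2 _ h
  constructor
  · -- (k,H)-independence by walks
    intro u hu v hv huv x n hwalk hx0 hxn
    exfalso
    have hn : 1 ≤ n := by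
      rcases Nat.eq_zero_or_pos n with h | h
      · subst h
        exact absurd (hx0.symm.trans hxn) huv
      · exact h
    have hDA01 : DA u (x 1) := by rw [← hx0]; exact hwalk 0 (by omega)
    obtain ⟨F1, ⟨hF1𝔉, hF1mem⟩, hF1uniq⟩ := hpart.2.1 u (x 1) hDA01
    by_cases hF1𝒮 : F1 ∈ 𝒮
    · -- all arcs of the walk lie in F1 ⊆ ⋃₀𝒮, extract a path: contradiction
      have hall : ∀ i < n, (x i, x (i + 1)) ∈ F1 := by
        intro i
        induction i with
        | zero => intro _; simpa [hx0] using hF1mem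
        | succ i ihi =>
          intro hi
          exact closure_lemma hpart hind hout hF1𝒮 (ihi (by omega)) (hwalk (i + 1) hi)
      have hwalkS : IsWalk (memRel (⋃₀ 𝒮)) x n := fun i hi => ⟨F1, hF1𝒮, hall i hi⟩
      exact hK2 u hu v hv huv (walk_toPath' _ hwalkS hx0 hxn huv)
    · -- first arc not in ⋃₀𝒮: contradiction with u ∈ classVerts (⋃₀𝒮)
      obtain ⟨b, hb⟩ := hK1 hu
      rcases hb with hub | hbu
      · -- (u,b) ∈ ⋃₀𝒮
        obtain ⟨F, hF𝒮, hubF⟩ := hub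
        have hDAub : DA u b := hsub ⟨F, hF𝒮, hubF⟩
        have hub_ne : u ≠ b := fun h => hloopless u (h ▸ hDAub)
        by_cases hbK : b ∈ K
        · exact hK2 u hu b hbK hub_ne (existsPath_single ⟨F, hF𝒮, hubF⟩ hub_ne)
        · have hbV : b ∈ classVerts (⋃₀ 𝒮) := ⟨u, Or.inr ⟨F, hF𝒮, hubF⟩⟩
          obtain ⟨w, hwK, hpath⟩ := hK3 b hbV hbK
          obtain ⟨y, p, ⟨hyw, _⟩, hy0, hyp⟩ := hpath
          by_cases hwu : w = u
          · -- b has a path back to u; last arc gives an in-arc of u in 𝒮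
            rw [hwu] at hyp
            have hp1 : 1 ≤ p := by
              rcases Nat.eq_zero_or_pos p with h | h
              · subst h
                exact absurd (hy0.symm.trans hyp).symm hub_ne
              · exact h
            have hlast : (y (p - 1), y p) ∈ ⋃₀ 𝒮 := by
              have := hyw (p - 1) (by omega)
              rwa [(by omega : p - 1 + 1 = p)] at this
            obtain ⟨E, hE𝒮, hEmem⟩ := hlast
            rw [hyp] at hEmem
            have hmem : (u, x 1) ∈ E := closure_lemma hpart hind hout hE𝒮 hEmem hDA01
            exact hF1𝒮 ((hF1uniq E ⟨hind.1 hE𝒮, hmem⟩) ▸ hE𝒮)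
          · -- u → b → w walk in ⋃₀𝒮, extract path u → w : contradiction
            set x1 : ℕ → V := fun i => if i = 0 then u else b with hx1
            have h10 : x1 0 = u := by simp [hx1]
            have h11 : x1 1 = b := by simp [hx1]
            have hx1walk : IsWalk (memRel (⋃₀ 𝒮)) x1 1 := by
              intro i hi
              interval_cases i
              show memRel (⋃₀ 𝒮) (x1 0) (x1 1)
              rw [h10, h11]
              exact ⟨F, hF𝒮, hubF⟩
            have hjoin : x1 1 = y 0 := by rw [h11, hy0]
            have hz := wconcat_walk hx1walk hyw hjoin
            have e0 : (fun i => if i ≤ 1 then x1 i else y (i - 1)) 0 = u :=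
              (wconcat_zero x1 y 1).trans h10
            have eL : (fun i => if i ≤ 1 then x1 i else y (i - 1)) (1 + p) = w :=
              (wconcat_last x1 y 1 p hjoin).trans hyp
            exact hK2 u hu w hwK (fun h => hwu h.symm)
              (walk_toPath' _ hz e0 eL (fun h => hwu h.symm))
      · -- (b,u) ∈ ⋃₀𝒮 : closure forces first arc into 𝒮
        obtain ⟨E, hE𝒮, hEmem⟩ := hbu
        have hmem : (u, x 1) ∈ E := closure_lemma hpart hind hout hE𝒮 hEmem hDA01
        exact hF1𝒮 ((hF1uniq E ⟨hind.1 hE𝒮, hmem⟩) ▸ hE𝒮)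
  · -- (l+1,H)-absorbency by walks
    intro u huK
    by_cases huV : u ∈ classVerts (⋃₀ 𝒮)
    · obtain ⟨v, hvK, y, p, ⟨hyw, _⟩, hy0, hyp⟩ := hK3 u huV huK
      refine ⟨v, hvK, y, p, fun i hi => hsub (hyw i hi), hy0, hyp, ?_⟩
      unfold hLength
      rw [obstructions_sUnion_empty hpart hind hout (fun i hi => hyw i hi), Set.ncard_empty]
      omega
    · obtain ⟨y0, hy0'⟩ := hiso u
      have hGex : ∃ G ∈ 𝔉, u ∈ classVerts G ∧ G ∉ 𝒮 := by
        rcases hy0' with h | h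
        · obtain ⟨G, ⟨hG, hmem⟩, _⟩ := hpart.2.1 u y0 h
          exact ⟨G, hG, ⟨y0, Or.inl hmem⟩, fun hG𝒮 => huV ⟨y0, Or.inl ⟨G, hG𝒮, hmem⟩⟩⟩
        · obtain ⟨G, ⟨hG, hmem⟩, _⟩ := hpart.2.1 y0 u h
          exact ⟨G, hG, ⟨y0, Or.inr hmem⟩, fun hG𝒮 => huV ⟨y0, Or.inr ⟨G, hG𝒮, hmem⟩⟩⟩
      obtain ⟨G, hG𝔉, huG, hG𝒮⟩ := hGex
      obtain ⟨F', hF'𝒮, φ, m, hφ, hφ0, hφm, hml⟩ := habs G hG𝔉 hG𝒮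
      have hm1 : 1 ≤ m := by
        rcases Nat.eq_zero_or_pos m with h | h
        · subst h
          exact absurd (hφ0 ▸ hφm ▸ hF'𝒮) hG𝒮
        · exact h
      obtain ⟨z', hz', x, n, hxw, hx0, hxn, hcount⟩ :=
        chain_lemma hpart hwp m hm1 φ hφ u (hφ0 ▸ huG)
      rw [hφm] at hz'
      have hz'V : z' ∈ classVerts (⋃₀ 𝒮) := by
        obtain ⟨b, hb⟩ := hz'
        exact ⟨b, hb.imp (fun h => ⟨F', hF'𝒮, h⟩) (fun h => ⟨F', hF'𝒮, h⟩)⟩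
      by_cases hz'K : z' ∈ K
      · refine ⟨z', hz'K, x, n, hxw, hx0, hxn, ?_⟩
        unfold hLength
        omega
      · obtain ⟨v, hvK, y, p, ⟨hyw, _⟩, hy0, hyp⟩ := hK3 z' hz'V hz'K
        have hjoin : x n = y 0 := by rw [hxn, hy0]
        have hyDA : IsWalk DA y p := fun i hi => hsub (hyw i hi)
        refine ⟨v, hvK, fun i => if i ≤ n then x i else y (i - n), n + p,
          wconcat_walk hxw hyDA hjoin, (wconcat_zero x y n).trans hx0,
          (wconcat_last x y n p hjoin).trans hyp, ?_⟩
        have hyempty : obstructions HA ρ y p = ∅ :=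
          obstructions_sUnion_empty hpart hind hout (fun i hi => hyw i hi)
        have hsubs := wconcat_obstructions HA ρ x y n p hjoin
        rw [hyempty, Set.image_empty, Set.union_empty] at hsubs
        have hle := ncard_subset_insert n (obstructions_finite HA ρ x n) hsubs
        unfold hLength
        omega
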